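/- arXiv:2510.14201 — 8 statements merged into one kernel-verified Lean document; each statement's English description precedes it below -/
import Mathlib

section
/- Let H' and H be real Hilbert spaces, let l : H' → H be a continuous linear map whose kernel is finite-dimensional and whose range is closed, and let c : H' → H be a compact continuous map. Fix R > 0 and set f = l + c. If f(h) ≠ 0 for every h ∈ S' = {h ∈ H' : ‖h‖ = R}, then there exists δ > 0 such that ‖f(h)‖ > δ for all h ∈ S'. -/
open Bornology Metric

/-- If `f = l + c` with `l` continuous linear with finite-dimensional kernel and closed
range, and `c` compact continuous, and `f` does not vanish on the sphere of radius `R`,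
then `‖f‖` is bounded away from zero on that sphere. -/
theorem stmt_0
    {H' H : Type*} [NormedAddCommGroup H'] [InnerProductSpace ℝ H'] [CompleteSpace H']
    [NormedAddCommGroup H] [InnerProductSpace ℝ H] [CompleteSpace H]
    (l : H' →L[ℝ] H)
    (hker : FiniteDimensional ℝ (LinearMap.ker (l : H' →ₗ[ℝ] H)))
    (hrange : IsClosed (LinearMap.range (l : H' →ₗ[ℝ] H) : Set H))
    (c : H' → H) (hc_cont : Continuous c)
    (hc_cpt : ∀ s : Set H', IsBounded s → IsCompact (closure (c '' s)))
    (R : ℝ) (hR : 0 < R)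
    (hf : ∀ h : H', ‖h‖ = R → l h + c h ≠ 0) :
    ∃ δ > 0, ∀ h : H', ‖h‖ = R → δ < ‖l h + c h‖ := by
  by_contra hcon
  push_neg at hcon
  -- choose a sequence on the sphere with ‖f (u n)‖ ≤ 1/(n+1)
  have hseq : ∀ n : ℕ, ∃ h : H', ‖h‖ = R ∧ ‖l h + c h‖ ≤ 1 / (n + 1) := by
    intro n
    obtain ⟨h, hh1, hh2⟩ := hcon (1 / (n + 1)) (by positivity)
    exact ⟨h, hh1, hh2⟩
  choose u hu hfu using hseq
  set K := LinearMap.ker (l : H' →ₗ[ℝ] H) with hK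
  haveI : CompleteSpace K := FiniteDimensional.complete ℝ K
  -- f (u n) → 0
  have hf0 : Filter.Tendsto (fun n => l (u n) + c (u n)) Filter.atTop (nhds 0) := by
    apply squeeze_zero_norm hfu
    exact tendsto_one_div_add_atTop_nhds_zero_nat
  -- extract subsequence along which c (u n) converges
  have hT : IsCompact (closure (c '' sphere (0 : H') R)) :=
    hc_cpt _ isBounded_sphere
  have hmem : ∀ n, c (u n) ∈ closure (c '' sphere (0 : H') R) := fun n =>
    subset_closure ⟨u n, by simpa [mem_sphere_zero_iff_norm] using hu n, rfl⟩
  obtain ⟨y, -, φ, hφ, hcy⟩ := hT.tendsto_subseq hmem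
  -- l (u (φ n)) → -y
  have hl : Filter.Tendsto (fun n => l (u (φ n))) Filter.atTop (nhds (-y)) := by
    have h1 : Filter.Tendsto (fun n => l (u (φ n)) + c (u (φ n))) Filter.atTop (nhds 0) :=
      hf0.comp hφ.tendsto_atTop
    have := h1.sub hcy
    simpa using this
  -- orthogonal decomposition
  set P := K.orthogonalProjectionOnto with hP
  have hPle : ∀ v : H', ‖(P v : H')‖ ≤ ‖v‖ := by
    intro v
    calc ‖(P v : H')‖ = ‖P v‖ := rfl
    _ ≤ ‖P‖ * ‖v‖ := P.le_opNorm v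
    _ ≤ 1 * ‖v‖ := mul_le_mul_of_nonneg_right (Submodule.orthogonalProjectionOnto_norm_le K) (norm_nonneg v)
    _ = ‖v‖ := one_mul _
  set q : ℕ → Kᗮ := fun n => ⟨u n - P (u n), Submodule.sub_starProjection_mem_orthogonal (K := K) (u n)⟩
    with hq_def
  have hlq : ∀ n, l ((q n : H')) = l (u n) := by
    intro n
    have hk : l ((P (u n) : H')) = 0 := (P (u n)).2
    simp only [hq_def, map_sub]
    rw [hk, sub_zero]
  -- the restriction of l to Kᗮ, corestricted to its range, is an equivalence
  set L' : Kᗮ →L[ℝ] H := l.comp (Kᗮ.subtypeL) with hL'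
  have hL'app : ∀ x : Kᗮ, L' x = l (x : H') := fun x => rfl
  have hrange_eq : (LinearMap.range (L' : Kᗮ →ₗ[ℝ] H) : Set H) = (LinearMap.range (l : H' →ₗ[ℝ] H) : Set H) := by
    apply Set.Subset.antisymm
    · rintro _ ⟨x, rfl⟩
      exact ⟨(x : H'), rfl⟩
    · rintro _ ⟨v, rfl⟩
      refine ⟨⟨v - P v, Submodule.sub_starProjection_mem_orthogonal (K := K) v⟩, ?_⟩
      have hk : l ((P v : H')) = 0 := (P v).2
      simp only [hL', ContinuousLinearMap.coe_coe, ContinuousLinearMap.comp_apply, Submodule.subtypeL_apply, map_sub]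
      rw [hk, sub_zero]
  have hFclosed : IsClosed (LinearMap.range (L' : Kᗮ →ₗ[ℝ] H) : Set H) := hrange_eq ▸ hrange
  set F := LinearMap.range (L' : Kᗮ →ₗ[ℝ] H) with hF
  haveI : CompleteSpace F := hFclosed.completeSpace_coe
  haveI : CompleteSpace Kᗮ := (Submodule.isClosed_orthogonal K).completeSpace_coe
  set L'' : Kᗮ →L[ℝ] F := L'.codRestrict F (fun x => LinearMap.mem_range_self _ x) with hL''
  have hinj : LinearMap.ker (L'' : Kᗮ →ₗ[ℝ] F) = ⊥ := by
    rw [Submodule.eq_bot_iff]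
    intro x hx
    have hx0 : l ((x : H')) = 0 := by
      have : L' x = 0 := by
        have := congrArg (Subtype.val) (show L'' x = 0 from hx)
        simpa [hL''] using this
      simpa [hL'app] using this
    have hxK : (x : H') ∈ K := hx0
    have hxKp : (x : H') ∈ Kᗮ := x.2
    have : (x : H') = 0 := by
      have := Submodule.inner_right_of_mem_orthogonal hxK hxKp
      have h2 : inner ℝ (x : H') (x : H') = (0 : ℝ) := this
      exact inner_self_eq_zero.mp h2
    exact Subtype.ext this
  have hsurj : LinearMap.range (L'' : Kᗮ →ₗ[ℝ] F) = ⊤ := by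
    rw [Submodule.eq_top_iff']
    rintro ⟨z, hz⟩
    obtain ⟨x, hx⟩ := hz
    exact ⟨x, Subtype.ext (by simpa [hL''] using hx)⟩
  set e : Kᗮ ≃L[ℝ] F := ContinuousLinearEquiv.ofBijective L'' hinj hsurj with he
  -- -y belongs to F
  have hyF : -y ∈ F := by
    have : ∀ n, l (u (φ n)) ∈ (LinearMap.range (L' : Kᗮ →ₗ[ℝ] H) : Set H) := by
      intro n
      rw [hrange_eq]
      exact ⟨u (φ n), rfl⟩
    exact hFclosed.mem_of_tendsto hl (Filter.Eventually.of_forall this)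
  -- q (φ n) converges
  have hL''tend : Filter.Tendsto (fun n => L'' (q (φ n))) Filter.atTop (nhds ⟨-y, hyF⟩) := by
    rw [tendsto_subtype_rng]
    have : ∀ n, ((L'' (q (φ n))) : H) = l (u (φ n)) := by
      intro n
      simp only [hL'', ContinuousLinearMap.coe_codRestrict_apply]
      rw [hL'app, hlq]
    simpa [this] using hl
  have hqtend : Filter.Tendsto (fun n => q (φ n)) Filter.atTop (nhds (e.symm ⟨-y, hyF⟩)) := by
    have h1 := (e.symm.continuous.tendsto _).comp hL''tend
    have h2 : ∀ n, e.symm (L'' (q (φ n))) = q (φ n) := by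
      intro n
      have he' : L'' (q (φ n)) = e (q (φ n)) := by
        rw [he, ContinuousLinearEquiv.coeFn_ofBijective]
      rw [he']
      exact ContinuousLinearEquiv.symm_apply_apply e (q (φ n))
    simpa [Function.comp_def, h2] using h1
  -- the kernel components are bounded in a finite-dimensional space
  haveI : ProperSpace K := FiniteDimensional.proper ℝ K
  have hkball : ∀ n, P (u (φ n)) ∈ closedBall (0 : K) R := by
    intro n
    rw [mem_closedBall_zero_iff]
    calc ‖P (u (φ n))‖ = ‖(P (u (φ n)) : H')‖ := rfl
    _ ≤ ‖u (φ n)‖ := hPle _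
    _ = R := hu _
  obtain ⟨kinf, -, ψ, hψ, hktend⟩ := (isCompact_closedBall (0 : K) R).tendsto_subseq hkball
  -- u (φ (ψ n)) converges to hlim
  set hlim : H' := (kinf : H') + ((e.symm ⟨-y, hyF⟩ : Kᗮ) : H') with hhlim
  have hutend : Filter.Tendsto (fun n => u (φ (ψ n))) Filter.atTop (nhds hlim) := by
    have h1 : Filter.Tendsto (fun n => ((P (u (φ (ψ n)))) : H')) Filter.atTop
        (nhds (kinf : H')) := (continuous_subtype_val.tendsto _).comp hktend
    have h2 : Filter.Tendsto (fun n => ((q (φ (ψ n))) : H')) Filter.atTop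
        (nhds ((e.symm ⟨-y, hyF⟩ : Kᗮ) : H')) :=
      (continuous_subtype_val.tendsto _).comp (hqtend.comp hψ.tendsto_atTop)
    have h3 := h1.add h2
    have h4 : ∀ n, ((P (u (φ (ψ n)))) : H') + ((q (φ (ψ n))) : H') = u (φ (ψ n)) := by
      intro n
      simp [hq_def]
    simpa [h4] using h3
  -- ‖hlim‖ = R
  have hnorm : ‖hlim‖ = R := by
    have h1 : Filter.Tendsto (fun n => ‖u (φ (ψ n))‖) Filter.atTop (nhds ‖hlim‖) :=
      (continuous_norm.tendsto _).comp hutend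
    have h2 : Filter.Tendsto (fun n => ‖u (φ (ψ n))‖) Filter.atTop (nhds R) := by
      simpa [hu] using (tendsto_const_nhds : Filter.Tendsto (fun _ : ℕ => R) Filter.atTop (nhds R))
    exact tendsto_nhds_unique h1 h2
  -- f (hlim) = 0, contradiction
  have hfcont : Continuous (fun h : H' => l h + c h) := l.continuous.add hc_cont
  have h1 : Filter.Tendsto (fun n => l (u (φ (ψ n))) + c (u (φ (ψ n)))) Filter.atTop
      (nhds (l hlim + c hlim)) := (hfcont.tendsto _).comp hutend
  have h2 : Filter.Tendsto (fun n => l (u (φ (ψ n))) + c (u (φ (ψ n)))) Filter.atTop (nhds 0) :=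
    hf0.comp ((hφ.comp hψ).tendsto_atTop)
  exact hf hlim hnorm (tendsto_nhds_unique h1 h2)
end

section
/- Let H' and H be real Hilbert spaces, let l : H' → H be a continuous linear map whose kernel is finite-dimensional and whose range is closed, and let c : H' → H be a compact continuous map. Set f = l + c and fix R > 0. Assume that the preimage under f of every bounded subset of H is bounded, and that f(h) ≠ 0 for every h ∈ H' with ‖h‖ ≥ R. Then there exists δ > 0 such that ‖f(h)‖ > δ for all h ∈ H' with ‖h‖ ≥ R. -/
open Bornology Metric

set_option maxHeartbeats 1000000 in
/-- If `f = l + c` is a bounded Fredholm-type map (preimages of bounded sets are bounded)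
that does not vanish on `{‖h‖ ≥ R}`, then `‖f‖` is bounded away from zero there. -/
theorem stmt_1
    {H' H : Type*} [NormedAddCommGroup H'] [InnerProductSpace ℝ H'] [CompleteSpace H']
    [NormedAddCommGroup H] [InnerProductSpace ℝ H] [CompleteSpace H]
    (l : H' →L[ℝ] H)
    (hker : FiniteDimensional ℝ (LinearMap.ker (l : H' →ₗ[ℝ] H)))
    (hrange : IsClosed (LinearMap.range (l : H' →ₗ[ℝ] H) : Set H))
    (c : H' → H) (hc_cont : Continuous c)
    (hc_cpt : ∀ s : Set H', IsBounded s → IsCompact (closure (c '' s)))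
    (R : ℝ) (hR : 0 < R)
    (hbdd : ∀ s : Set H, IsBounded s → IsBounded ((fun h => l h + c h) ⁻¹' s))
    (hf : ∀ h : H', R ≤ ‖h‖ → l h + c h ≠ 0) :
    ∃ δ > 0, ∀ h : H', R ≤ ‖h‖ → δ < ‖l h + c h‖ := by
  classical
  set f : H' → H := fun h => l h + c h with hf_def
  have hf_cont : Continuous f := l.continuous.add hc_cont
  set K : Submodule ℝ H' := LinearMap.ker (l : H' →ₗ[ℝ] H) with hK_def
  haveI : CompleteSpace K := FiniteDimensional.complete ℝ K
  haveI : CompleteSpace Kᗮ := K.isClosed_orthogonal.completeSpace_coe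
  set φ : (Kᗮ : Submodule ℝ H') →L[ℝ] H := l.comp Kᗮ.subtypeL with hφ_def
  have hφ_inj : Function.Injective φ := by
    intro a b hab
    have hsub : φ (a - b) = 0 := by rw [map_sub, hab, sub_self]
    have hmemK : ((a - b : Kᗮ) : H') ∈ K := by
      simpa [hK_def, LinearMap.mem_ker, hφ_def] using hsub
    have hmemO : ((a - b : Kᗮ) : H') ∈ Kᗮ := (a - b).2
    have : ((a - b : Kᗮ) : H') = 0 := by
      have := K.orthogonal_disjoint.le_bot ⟨hmemK, hmemO⟩
      simpa using this
    have : (a - b : Kᗮ) = 0 := Subtype.ext this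
    exact sub_eq_zero.mp this
  have hrange_eq : Set.range φ = (LinearMap.range (l : H' →ₗ[ℝ] H) : Set H) := by
    ext y
    constructor
    · rintro ⟨v, rfl⟩
      exact ⟨(v : H'), rfl⟩
    · rintro ⟨h, rfl⟩
      refine ⟨⟨h - K.orthogonalProjectionOnto h, Submodule.sub_starProjection_mem_orthogonal h⟩, ?_⟩
      have hmem : ((K.orthogonalProjectionOnto h : H')) ∈ K := (K.orthogonalProjectionOnto h).2
      have : l ((K.orthogonalProjectionOnto h : H')) = 0 := LinearMap.mem_ker.mp hmem
      simpa [hφ_def, map_sub] using this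
  have hφ_clo : IsClosed (Set.range φ) := hrange_eq ▸ hrange
  set e := φ.equivRange hφ_inj hφ_clo with he_def
  have he_coe : ∀ v : Kᗮ, ((e v : LinearMap.range (φ : Kᗮ →ₗ[ℝ] H)) : H) = φ v := fun v => rfl
  -- main argument, by contradiction
  by_contra hcon
  push_neg at hcon
  have hcon' : ∀ n : ℕ, ∃ h : H', R ≤ ‖h‖ ∧ ‖f h‖ ≤ 1 / (n + 1) := by
    intro n
    obtain ⟨h, hh1, hh2⟩ := hcon (1 / (n + 1)) (by positivity)
    exact ⟨h, hh1, hh2⟩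
  choose x hx1 hx2 using hcon'
  have hfx_t : Filter.Tendsto (fun n => f (x n)) Filter.atTop (nhds 0) := by
    have h0 : Filter.Tendsto (fun n : ℕ => 1 / ((n : ℝ) + 1)) Filter.atTop (nhds 0) :=
      tendsto_one_div_add_atTop_nhds_zero_nat
    exact squeeze_zero_norm (fun n => hx2 n) h0
  set B : Set H' := f ⁻¹' closedBall (0 : H) 1 with hB_def
  have hxB : ∀ n, x n ∈ B := by
    intro n
    simp only [hB_def, Set.mem_preimage, mem_closedBall, dist_zero_right]
    calc ‖f (x n)‖ ≤ 1 / (n + 1) := hx2 n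
    _ ≤ 1 := by
        rw [div_le_one (by positivity)]
        linarith [Nat.cast_nonneg (α := ℝ) n]
  have hBb : IsBounded B := hbdd _ (isBounded_closedBall)
  obtain ⟨M, hM⟩ := hBb.subset_closedBall 0
  -- compact subsequence for c
  have hcx : ∀ n, c (x n) ∈ closure (c '' B) := fun n => subset_closure ⟨_, hxB n, rfl⟩
  obtain ⟨z, -, ψ2, hψ2, hz_t⟩ := (hc_cpt _ hBb).tendsto_subseq hcx
  have hlx : Filter.Tendsto (fun n => l (x (ψ2 n))) Filter.atTop (nhds (-z)) := by
    have heq : (fun n => l (x (ψ2 n))) = fun n => f (x (ψ2 n)) - c (x (ψ2 n)) := by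
      funext n; simp [hf_def]
    rw [heq]
    have := (hfx_t.comp hψ2.tendsto_atTop).sub hz_t
    simpa using this
  -- kernel components
  set u : ℕ → K := fun n => K.orthogonalProjectionOnto (x (ψ2 n)) with hu_def
  have hu_bdd : ∀ n, u n ∈ closedBall (0 : K) M := by
    intro n
    have h1 : ‖u n‖ ≤ ‖x (ψ2 n)‖ := by
      have := (K.orthogonalProjectionOnto).le_opNorm (x (ψ2 n))
      have h2 := Submodule.orthogonalProjectionOnto_norm_le K
      nlinarith [norm_nonneg (x (ψ2 n))]
    have h2 : ‖x (ψ2 n)‖ ≤ M := by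
      have := hM (hxB (ψ2 n))
      simpa [mem_closedBall, dist_eq_norm] using this
    simp only [mem_closedBall, dist_zero_right]
    linarith
  obtain ⟨u₀, -, ψ3, hψ3, hu_t⟩ := (isCompact_closedBall (0 : K) M).tendsto_subseq hu_bdd
  -- orthogonal components
  set w : ℕ → (Kᗮ : Submodule ℝ H') := fun n =>
    ⟨x (ψ2 n) - u n, Submodule.sub_starProjection_mem_orthogonal _⟩ with hw_def
  have hφw : ∀ n, φ (w n) = l (x (ψ2 n)) := by
    intro n
    have hmem : ((u n : H')) ∈ K := (u n).2
    have : l ((u n : H')) = 0 := LinearMap.mem_ker.mp hmem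
    simp [hφ_def, hw_def, map_sub, this]
  have hmem_z : -z ∈ Set.range φ := by
    refine hφ_clo.mem_of_tendsto hlx (Filter.Eventually.of_forall fun n => ?_)
    exact ⟨w n, hφw n⟩
  have hmem_z' : -z ∈ LinearMap.range (φ : Kᗮ →ₗ[ℝ] H) := by
    obtain ⟨v, hv⟩ := hmem_z; exact ⟨v, hv⟩
  have hew_t : Filter.Tendsto (fun n => e (w n)) Filter.atTop
      (nhds (⟨-z, hmem_z'⟩ : LinearMap.range (φ : Kᗮ →ₗ[ℝ] H))) := by
    rw [tendsto_subtype_rng]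
    simpa only [he_coe, hφw] using hlx
  have hw_t : Filter.Tendsto (fun n => w n) Filter.atTop
      (nhds (e.symm ⟨-z, hmem_z'⟩)) := by
    have h := (e.symm.continuous.tendsto _).comp hew_t
    have heq : (⇑e.symm ∘ fun n => e (w n)) = fun n => w n := by
      funext n; exact e.symm_apply_apply _
    rwa [heq] at h
  set wlim : (Kᗮ : Submodule ℝ H') := e.symm ⟨-z, hmem_z'⟩
  -- combine
  set a : H' := (u₀ : H') + (wlim : H') with ha_def
  have hx_t : Filter.Tendsto (fun n => x (ψ2 (ψ3 n))) Filter.atTop (nhds a) := by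
    have h1 : Filter.Tendsto (fun n => ((u (ψ3 n) : H'))) Filter.atTop (nhds (u₀ : H')) :=
      (continuous_subtype_val.tendsto _).comp hu_t
    have h2 : Filter.Tendsto (fun n => ((w (ψ3 n) : H'))) Filter.atTop (nhds (wlim : H')) :=
      ((continuous_subtype_val.tendsto _).comp hw_t).comp hψ3.tendsto_atTop
    have heq : (fun n => x (ψ2 (ψ3 n))) =
        fun n => ((u (ψ3 n) : H')) + ((w (ψ3 n) : H')) := by
      funext n; simp [hw_def]
    rw [heq, ha_def]
    exact h1.add h2
  -- the limit has norm ≥ R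
  have ha_norm : R ≤ ‖a‖ := by
    have hn_t : Filter.Tendsto (fun n => ‖x (ψ2 (ψ3 n))‖) Filter.atTop (nhds ‖a‖) :=
      (continuous_norm.tendsto _).comp hx_t
    exact le_of_tendsto_of_tendsto' tendsto_const_nhds hn_t
      fun n => hx1 (ψ2 (ψ3 n))
  -- f a = 0
  have hfa : f a = 0 := by
    have h1 : Filter.Tendsto (fun n => f (x (ψ2 (ψ3 n)))) Filter.atTop (nhds (f a)) :=
      (hf_cont.tendsto _).comp hx_t
    have h2 : Filter.Tendsto (fun n => f (x (ψ2 (ψ3 n)))) Filter.atTop (nhds 0) :=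
      hfx_t.comp ((hψ2.comp hψ3).tendsto_atTop)
    exact tendsto_nhds_unique h1 h2
  exact hf a ha_norm hfa
end

section
/- Let H' and H be real Hilbert spaces, let l : H' → H be a continuous linear map whose kernel is finite-dimensional, whose range is closed, and whose range has finite-dimensional orthogonal complement. Fix R > 0 and let c : D' → H be a continuous map with relatively compact image such that f = l + c satisfies f(h) ≠ 0 for all h ∈ S'. Then there exist a finite-dimensional subspace V ⊆ H containing the orthogonal complement of the range of l, and a continuous map F : D' × [0,1] → H, such that: F(h,0) = f(h) and F(h,1) = l(h) + P_V(c(h)) for all h ∈ D'; for each t ∈ [0,1] the map h ↦ F(h,t) − l(h) has relatively compact image; and F(h,t) ≠ 0 for all h ∈ S' and t ∈ [0,1]. -/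
open Bornology Metric

set_option maxHeartbeats 1000000 in
/-- Every map `f = l + c` on the disk `D'` which is a compact perturbation of a
linear Fredholm map `l` and does not vanish on the bounding sphere `S'` is
compactly homotopic (rel the sphere, through compact perturbations of `l`)
to a map `l + P_V ∘ c` whose perturbation has finite-dimensional range `V`,
where `V` contains the orthogonal complement of the range of `l`. -/
theorem stmt_2
    {H' H : Type*} [NormedAddCommGroup H'] [InnerProductSpace ℝ H'] [CompleteSpace H']
    [NormedAddCommGroup H] [InnerProductSpace ℝ H] [CompleteSpace H]
    (l : H' →L[ℝ] H)
    (hker : FiniteDimensional ℝ (LinearMap.ker (l : H' →ₗ[ℝ] H)))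
    (hrange : IsClosed (LinearMap.range (l : H' →ₗ[ℝ] H) : Set H))
    (hcoker : FiniteDimensional ℝ ((LinearMap.range (l : H' →ₗ[ℝ] H))ᗮ))
    (R : ℝ) (hR : 0 < R)
    (c : H' → H)
    (hc_cont : ContinuousOn c (closedBall 0 R))
    (hc_cpt : IsCompact (closure (c '' closedBall 0 R)))
    (hf : ∀ h : H', ‖h‖ = R → l h + c h ≠ 0) :
    ∃ V : Submodule ℝ H, ∃ _ : FiniteDimensional ℝ V,
      (LinearMap.range (l : H' →ₗ[ℝ] H))ᗮ ≤ V ∧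
      ∃ F : H' → ℝ → H,
        ContinuousOn (fun p : H' × ℝ => F p.1 p.2) (closedBall 0 R ×ˢ Set.Icc 0 1) ∧
        (∀ h ∈ closedBall (0 : H') R, F h 0 = l h + c h) ∧
        (∀ h ∈ closedBall (0 : H') R, F h 1 = l h + (V.orthogonalProjectionOnto (c h) : H)) ∧
        (∀ t ∈ Set.Icc (0 : ℝ) 1,
          IsCompact (closure ((fun h => F h t - l h) '' closedBall 0 R))) ∧
        (∀ t ∈ Set.Icc (0 : ℝ) 1, ∀ h : H', ‖h‖ = R → F h t ≠ 0) := by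
  classical
  set N : Submodule ℝ H' := LinearMap.ker (l : H' →ₗ[ℝ] H) with hN
  set W : Submodule ℝ H' := Nᗮ with hW
  haveI : CompleteSpace (LinearMap.range (l : H' →ₗ[ℝ] H)) := hrange.completeSpace_coe
  -- the restriction of `l` to `W` as a map onto its range
  set l' : W →L[ℝ] LinearMap.range (l : H' →ₗ[ℝ] H) :=
    (l.comp (Submodule.subtypeL W)).codRestrict (LinearMap.range (l : H' →ₗ[ℝ] H))
      (fun x => LinearMap.mem_range_self _ _) with hl'
  have hl'apply : ∀ x : W, (l' x : H) = l (x : H') := fun x => rfl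
  have hinj : LinearMap.ker (l' : W →ₗ[ℝ] LinearMap.range (l : H' →ₗ[ℝ] H)) = ⊥ := by
    rw [Submodule.eq_bot_iff]
    rintro x hx
    have hx0 : l (x : H') = 0 := by
      have := congrArg (Subtype.val) hx
      simpa [hl'apply] using this
    have hxN : (x : H') ∈ N := by simpa [hN, LinearMap.mem_ker] using hx0
    have h2 := x.2 (x : H') hxN
    have hx0' : (x : H') = 0 := by rwa [inner_self_eq_zero] at h2
    exact Subtype.ext hx0'
  have hsurj : LinearMap.range (l' : W →ₗ[ℝ] LinearMap.range (l : H' →ₗ[ℝ] H)) = ⊤ := by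
    rw [Submodule.eq_top_iff']
    rintro ⟨y, hy⟩
    obtain ⟨h₀, rfl⟩ := hy
    refine ⟨⟨h₀ - (N.orthogonalProjectionOnto h₀ : H'),
      Submodule.sub_starProjection_mem_orthogonal (K := N) _⟩, ?_⟩
    apply Subtype.ext
    have hmem : (N.orthogonalProjectionOnto h₀ : H') ∈ N := (N.orthogonalProjectionOnto h₀).2
    have h0 : l ((N.orthogonalProjectionOnto h₀ : H')) = 0 := hmem
    show l (h₀ - _) = l h₀
    simp only [map_sub, h0, sub_zero]
  set e : W ≃L[ℝ] LinearMap.range (l : H' →ₗ[ℝ] H) := ContinuousLinearEquiv.ofBijective l' hinj hsurj with he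
  have heapp : ∀ x : W, (e x : H) = l (x : H') := fun x => rfl
  -- Step 1: positive lower bound on the sphere
  have hdelta : ∃ δ > 0, ∀ h : H', ‖h‖ = R → δ ≤ ‖l h + c h‖ := by
    by_contra hcon
    push_neg at hcon
    have hseq : ∀ n : ℕ, ∃ h : H', ‖h‖ = R ∧ ‖l h + c h‖ < 1 / (n + 1) := by
      intro n
      obtain ⟨h, hh, hlt⟩ := hcon (1 / (n + 1)) (by positivity)
      exact ⟨h, hh, hlt⟩
    choose h hhn hhlt using hseq
    have hball : ∀ n, h n ∈ closedBall (0 : H') R := fun n => by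
      simp [mem_closedBall_zero_iff, (hhn n).le]
    have hcmem : ∀ n, c (h n) ∈ closure (c '' closedBall 0 R) := fun n =>
      subset_closure ⟨h n, hball n, rfl⟩
    obtain ⟨y, hy, φ, hφ, hcy⟩ := hc_cpt.tendsto_subseq hcmem
    -- projections onto the finite-dimensional kernel stay in a compact ball
    set k : ℕ → N := fun n => N.orthogonalProjectionOnto (h (φ n)) with hk
    have hkball : ∀ n, k n ∈ closedBall (0 : N) R := by
      intro n
      rw [mem_closedBall_zero_iff]
      calc ‖k n‖ ≤ 1 * ‖h (φ n)‖ :=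
            N.orthogonalProjectionOnto.le_of_opNorm_le (N.orthogonalProjectionOnto_norm_le) _
        _ = R := by rw [one_mul, hhn]
    obtain ⟨k₀, _, ψ, hψ, hkc⟩ := (isCompact_closedBall (0 : N) R).tendsto_subseq hkball
    -- the final subsequence
    set a : ℕ → H' := fun n => h (φ (ψ n)) with ha
    have hφψ : Filter.Tendsto (φ ∘ ψ) Filter.atTop Filter.atTop :=
      (hφ.comp hψ).tendsto_atTop
    have hfa : Filter.Tendsto (fun n => l (a n) + c (a n)) Filter.atTop (nhds 0) := by
      rw [tendsto_zero_iff_norm_tendsto_zero]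
      refine squeeze_zero (fun n => norm_nonneg _) (fun n => (hhlt (φ (ψ n))).le) ?_
      exact (tendsto_one_div_add_atTop_nhds_zero_nat).comp hφψ
    have hca : Filter.Tendsto (fun n => c (a n)) Filter.atTop (nhds y) := hcy.comp hψ.tendsto_atTop
    have hla : Filter.Tendsto (fun n => l (a n)) Filter.atTop (nhds (-y)) := by
      have := hfa.sub hca
      simpa using this
    have hymem : -y ∈ LinearMap.range (l : H' →ₗ[ℝ] H) :=
      hrange.mem_of_tendsto hla (Filter.Eventually.of_forall fun n => ⟨a n, rfl⟩)
    set u : ℕ → LinearMap.range (l : H' →ₗ[ℝ] H) := fun n => ⟨l (a n), LinearMap.mem_range_self _ _⟩ with hu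
    have hut : Filter.Tendsto u Filter.atTop (nhds ⟨-y, hymem⟩) := by
      rw [hu]
      exact tendsto_subtype_rng.2 hla
    set w : ℕ → W := fun n => ⟨a n - (N.orthogonalProjectionOnto (a n) : H'),
      Submodule.sub_starProjection_mem_orthogonal (K := N) _⟩ with hw
    have hew : ∀ n, e (w n) = u n := by
      intro n
      apply Subtype.ext
      rw [heapp]
      have hmem : (N.orthogonalProjectionOnto (a n) : H') ∈ N := (N.orthogonalProjectionOnto (a n)).2
      have h0 : l ((N.orthogonalProjectionOnto (a n) : H')) = 0 := hmem
      simp only [hw, map_sub, h0, sub_zero]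
      rfl
    have hwt : Filter.Tendsto (fun n => (w n : H')) Filter.atTop
        (nhds ((e.symm ⟨-y, hymem⟩ : W) : H')) := by
      have h1 : Filter.Tendsto (fun n => e.symm (u n)) Filter.atTop (nhds (e.symm ⟨-y, hymem⟩)) :=
        (e.symm.continuous.tendsto _).comp hut
      have h2 : ∀ n, e.symm (u n) = w n := fun n => by rw [← hew n, e.symm_apply_apply]
      have h3 := h1.congr (fun n => h2 n)
      exact (continuous_subtype_val.tendsto _).comp h3
    have hkt : Filter.Tendsto (fun n => ((N.orthogonalProjectionOnto (a n) : N) : H'))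
        Filter.atTop (nhds (k₀ : H')) :=
      (continuous_subtype_val.tendsto _).comp hkc
    set hlim : H' := (k₀ : H') + ((e.symm ⟨-y, hymem⟩ : W) : H') with hinf
    have hat : Filter.Tendsto a Filter.atTop (nhds hlim) := by
      have := hkt.add hwt
      refine this.congr (fun n => ?_)
      simp [hw]
    have hnorm : ‖hlim‖ = R := by
      have h1 : Filter.Tendsto (fun n => ‖a n‖) Filter.atTop (nhds ‖hlim‖) :=
        (continuous_norm.tendsto _).comp hat
      have h2 : (fun n => ‖a n‖) = fun _ => R := funext fun n => hhn _
      rw [h2] at h1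
      exact tendsto_nhds_unique h1 tendsto_const_nhds
    have hmemD : hlim ∈ closedBall (0 : H') R := by
      simp [mem_closedBall_zero_iff, hnorm.le]
    have hcinf : Filter.Tendsto (fun n => c (a n)) Filter.atTop (nhds (c hlim)) := by
      refine (hc_cont hlim hmemD).tendsto.comp ?_
      rw [tendsto_nhdsWithin_iff]
      exact ⟨hat, Filter.Eventually.of_forall fun n => hball _⟩
    have hcy' : c hlim = y := tendsto_nhds_unique hcinf hca
    have hlinf : l hlim = -y := tendsto_nhds_unique ((l.continuous.tendsto _).comp hat) hla
    exact hf hlim hnorm (by rw [hlinf, hcy', neg_add_cancel])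
  obtain ⟨δ, hδ0, hδ⟩ := hdelta
  -- Step 2: choose the finite-dimensional subspace V
  obtain ⟨s, hsub, hsfin, hcover⟩ :=
    hc_cpt.finite_cover_balls (show (0 : ℝ) < δ / 2 by linarith)
  set V : Submodule ℝ H := (LinearMap.range (l : H' →ₗ[ℝ] H))ᗮ ⊔ Submodule.span ℝ s with hV
  haveI hfs : FiniteDimensional ℝ (Submodule.span ℝ s) := .span_of_finite ℝ hsfin
  haveI hfV : FiniteDimensional ℝ V := Submodule.finiteDimensional_sup _ _
  have hproj : ∀ y ∈ closure (c '' closedBall 0 R),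
      ‖y - (V.orthogonalProjectionOnto y : H)‖ < δ := by
    intro y hy
    obtain ⟨z, hz⟩ := Set.mem_iUnion₂.1 (hcover hy)
    obtain ⟨hzs, hyz⟩ := hz
    have hzV : z ∈ V := le_sup_right (α := Submodule ℝ H) (Submodule.subset_span hzs)
    have hle : ‖y - (V.orthogonalProjectionOnto y : H)‖ ≤ ‖y - z‖ := by
      show ‖y - V.starProjection y‖ ≤ _
      rw [Submodule.starProjection_minimal]
      refine ciInf_le ⟨0, ?_⟩ (⟨z, hzV⟩ : V)
      rintro r ⟨x, rfl⟩
      exact norm_nonneg _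
    have : ‖y - z‖ < δ / 2 := by
      rw [← dist_eq_norm]
      exact mem_ball.1 hyz
    linarith
  -- Step 3: the homotopy
  set P : H → H := fun y => (V.orthogonalProjectionOnto y : H) with hP
  have hPcont : Continuous P := continuous_subtype_val.comp (V.orthogonalProjectionOnto).continuous
  set F : H' → ℝ → H := fun h t => l h + c h + t • (P (c h) - c h) with hF
  refine ⟨V, inferInstance, le_sup_left, F, ?_, ?_, ?_, ?_, ?_⟩
  · -- continuity
    have h1 : ContinuousOn (fun p : H' × ℝ => c p.1) (closedBall 0 R ×ˢ Set.Icc 0 1) :=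
      hc_cont.comp continuous_fst.continuousOn (fun p hp => hp.1)
    have h2 : ContinuousOn (fun p : H' × ℝ => l p.1) (closedBall 0 R ×ˢ Set.Icc 0 1) :=
      (l.continuous.comp continuous_fst).continuousOn
    have h3 : ContinuousOn (fun p : H' × ℝ => P (c p.1))
        (closedBall 0 R ×ˢ Set.Icc 0 1) := hPcont.comp_continuousOn h1
    exact (h2.add h1).add (continuous_snd.continuousOn.smul (h3.sub h1))
  · intro h _
    simp [hF]
  · intro h _
    simp only [hF, one_smul]
    rw [hP]
    abel
  · -- compactness of the perturbation
    intro t _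
    set G : H → H := fun y => y + t • (P y - y) with hG
    have hGcont : Continuous G :=
      continuous_id.add (continuous_const.smul (hPcont.sub continuous_id))
    have himg : (fun h => F h t - l h) '' closedBall 0 R ⊆
        G '' closure (c '' closedBall 0 R) := by
      rintro x ⟨h, hh, rfl⟩
      refine ⟨c h, subset_closure ⟨h, hh, rfl⟩, ?_⟩
      simp only [hF, hG]
      abel
    have hcmp : IsCompact (G '' closure (c '' closedBall 0 R)) := hc_cpt.image hGcont
    exact hcmp.of_isClosed_subset isClosed_closure (closure_minimal himg hcmp.isClosed)
  · -- nonvanishing on the sphere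
    rintro t ⟨ht0, ht1⟩ h hhR hzero
    have h1 : δ ≤ ‖l h + c h‖ := hδ h hhR
    have hhD : h ∈ closedBall (0 : H') R := by
      simp [mem_closedBall_zero_iff, hhR.le]
    have h2 : ‖c h - P (c h)‖ < δ := hproj _ (subset_closure ⟨h, hhD, rfl⟩)
    have h3 : l h + c h = -(t • (P (c h) - c h)) := by
      have := hzero
      simp only [hF] at this
      linear_combination (norm := abel_nf) this
    have h4 : ‖l h + c h‖ = t * ‖P (c h) - c h‖ := by
      rw [h3, norm_neg, norm_smul, Real.norm_eq_abs, abs_of_nonneg ht0]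
    have h5 : t * ‖P (c h) - c h‖ ≤ ‖P (c h) - c h‖ := by
      nlinarith [norm_nonneg (P (c h) - c h)]
    have h6 : ‖P (c h) - c h‖ = ‖c h - P (c h)‖ := norm_sub_rev _ _
    linarith
end

section
/- Let H' and H be real Hilbert spaces, let l : H' → H be a continuous linear map, and let V ⊆ W be finite-dimensional subspaces of H. Set V' = l⁻¹(V), W' = l⁻¹(W), and let P denote the orthogonal projection of H' onto the closed subspace V'. Fix R > 0 and let c : D' → H be a continuous map with c(D') ⊆ V such that f = l + c satisfies f(h) ≠ 0 for all h ∈ S' ∩ V'. Then for every t ∈ [0,1] and every w ∈ S' ∩ W', one has l(w) + (1−t)·c(P w) + t·c(w) ≠ 0. Consequently, the map F(w,t) = l(w) + (1−t)·c(P w) + t·c(w) is a homotopy of maps of pairs (D' ∩ W', S' ∩ W') → (W, W ∖ {0}) from the suspension w ↦ l(w − P w) + f(P w) of f restricted to D' ∩ V', to the restriction of f to D' ∩ W'. -/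
open Bornology Metric
open scoped RealInnerProductSpace

/-- Suspension invariance: if `c` takes values in `V ⊆ W` and `f = l + c` does not vanish
on `S' ∩ V'`, then the straight-line homotopy `F(w,t) = l w + (1-t)•c(P w) + t•c(w)`
(where `P` is the orthogonal projection onto `V' = l⁻¹(V)`) does not vanish on
`S' ∩ W'`; consequently `F` is a homotopy of maps of pairs
`(D' ∩ W', S' ∩ W') → (W, W \ {0})` from the suspension of `f|_{D' ∩ V'}` to `f|_{D' ∩ W'}`. -/
theorem stmt_4
    {H' H : Type*} [NormedAddCommGroup H'] [InnerProductSpace ℝ H'] [CompleteSpace H']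
    [NormedAddCommGroup H] [InnerProductSpace ℝ H] [CompleteSpace H]
    (l : H' →L[ℝ] H)
    (V W : Submodule ℝ H) [FiniteDimensional ℝ V] [FiniteDimensional ℝ W]
    (hVW : V ≤ W)
    -- `P` is the orthogonal projection of `H'` onto the closed subspace `V' = l⁻¹(V)`:
    (P : H' →L[ℝ] H')
    (hPmem : ∀ h : H', l (P h) ∈ V)
    (hPperp : ∀ h v : H', l v ∈ V → ⟪h - P h, v⟫ = 0)
    (R : ℝ) (hR : 0 < R)
    (c : H' → H)
    (hc_cont : ContinuousOn c (closedBall 0 R))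
    (hcV : ∀ h ∈ closedBall (0 : H') R, c h ∈ V)
    (hf : ∀ h : H', ‖h‖ = R → l h ∈ V → l h + c h ≠ 0) :
    -- the homotopy never vanishes on `S' ∩ W'`
    (∀ t ∈ Set.Icc (0 : ℝ) 1, ∀ w : H', ‖w‖ = R → l w ∈ W →
        l w + (1 - t) • c (P w) + t • c w ≠ 0) ∧
    -- `F` is continuous on `(D' ∩ W') × [0,1]`
    ContinuousOn (fun p : H' × ℝ => l p.1 + (1 - p.2) • c (P p.1) + p.2 • c p.1)
      ((closedBall 0 R ∩ {h : H' | l h ∈ W}) ×ˢ Set.Icc 0 1) ∧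
    -- `F` takes values in `W` on `D' ∩ W'`
    (∀ w ∈ closedBall (0 : H') R ∩ {h : H' | l h ∈ W}, ∀ t ∈ Set.Icc (0 : ℝ) 1,
        l w + (1 - t) • c (P w) + t • c w ∈ W) ∧
    -- at `t = 0`, `F` is the suspension `w ↦ l (w - P w) + f (P w)` of `f|_{D' ∩ V'}`
    (∀ w : H', l w + (1 - (0 : ℝ)) • c (P w) + (0 : ℝ) • c w
        = l (w - P w) + (l (P w) + c (P w))) ∧
    -- at `t = 1`, `F` is the restriction of `f`
    (∀ w : H', l w + (1 - (1 : ℝ)) • c (P w) + (1 : ℝ) • c w = l w + c w) := by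
  -- `P` is norm-nonincreasing
  have hPle : ∀ h : H', ‖P h‖ ≤ ‖h‖ := by
    intro h
    have horth : ⟪h - P h, P h⟫ = 0 := hPperp h (P h) (hPmem h)
    have hsq : ‖h‖ ^ 2 = ‖h - P h‖ ^ 2 + ‖P h‖ ^ 2 := by
      have := norm_add_sq_real (h - P h) (P h)
      simp only [sub_add_cancel, horth] at this
      linarith
    nlinarith [norm_nonneg (P h), norm_nonneg h, sq_nonneg ‖h - P h‖]
  have hPball : ∀ h ∈ closedBall (0 : H') R, P h ∈ closedBall (0 : H') R := by
    intro h hh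
    rw [mem_closedBall_zero_iff] at *
    exact (hPle h).trans hh
  refine ⟨?_, ?_, ?_, ?_, ?_⟩
  · intro t ht w hw hlw heq
    have hwball : w ∈ closedBall (0 : H') R := by
      rw [mem_closedBall_zero_iff, hw]
    have hcPw : c (P w) ∈ V := hcV _ (hPball w hwball)
    have hcw : c w ∈ V := hcV w hwball
    have hlwsub : l (w - P w) ∈ V := by
      have hlww : l w = -((1 - t) • c (P w) + t • c w) := by
        rw [add_assoc] at heq
        exact eq_neg_of_add_eq_zero_left heq
      have : l (w - P w) = -((1 - t) • c (P w) + t • c w) - l (P w) := by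
        rw [map_sub, hlww]
      rw [this]
      exact sub_mem (neg_mem (add_mem (V.smul_mem _ hcPw) (V.smul_mem _ hcw))) (hPmem w)
    have hzero : w - P w = 0 := by
      have := hPperp w (w - P w) hlwsub
      rwa [real_inner_self_eq_norm_sq, pow_eq_zero_iff (by norm_num), norm_eq_zero] at this
    have hPw : P w = w := (sub_eq_zero.mp hzero).symm
    rw [hPw] at heq
    have heq' : l w + c w = 0 := by
      have h2 : l w + (1 - t) • c w + t • c w = l w + c w := by module
      rw [h2] at heq
      exact heq
    have hlwV : l w ∈ V := by
      have h3 : l w = -(c w) := eq_neg_of_add_eq_zero_left heq'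
      rw [h3]
      exact neg_mem hcw
    exact hf w hw hlwV heq'
  · have hcont_c : ContinuousOn (fun p : H' × ℝ => c p.1)
        ((closedBall 0 R ∩ {h : H' | l h ∈ W}) ×ˢ Set.Icc 0 1) := by
      apply hc_cont.comp continuous_fst.continuousOn
      intro p hp
      exact hp.1.1
    have hcont_cP : ContinuousOn (fun p : H' × ℝ => c (P p.1))
        ((closedBall 0 R ∩ {h : H' | l h ∈ W}) ×ˢ Set.Icc 0 1) := by
      apply hc_cont.comp (P.continuous.comp continuous_fst).continuousOn
      intro p hp
      exact hPball _ hp.1.1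
    exact ((l.continuous.comp continuous_fst).continuousOn.add
      (((continuous_const.sub continuous_snd).continuousOn).smul hcont_cP)).add
      (continuous_snd.continuousOn.smul hcont_c)
  · intro w hw t ht
    exact add_mem (add_mem hw.2 (W.smul_mem _ (hVW (hcV _ (hPball w hw.1)))))
      (W.smul_mem _ (hVW (hcV w hw.1)))
  · intro w
    rw [map_sub]
    module
  · intro w
    module
end

section
/- Let H' and H be real Hilbert spaces, let l : H' → H be a continuous linear map whose kernel is finite-dimensional and whose range is closed, and let c : H' → H be a compact continuous map. If (hₙ) is a bounded sequence in H' such that l(hₙ) + c(hₙ) → 0 in norm, then there exist h ∈ H' with l(h) + c(h) = 0 and a subsequence of (hₙ) that converges to h in norm. -/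
open Bornology Filter

/-- If `f = l + c` with `l` continuous linear with finite-dimensional kernel and closed
range and `c` compact continuous, then any bounded sequence `(hₙ)` with `f(hₙ) → 0`
has a subsequence converging in norm to a zero of `f`. -/
theorem stmt_6
    {H' H : Type*} [NormedAddCommGroup H'] [InnerProductSpace ℝ H'] [CompleteSpace H']
    [NormedAddCommGroup H] [InnerProductSpace ℝ H] [CompleteSpace H]
    (l : H' →L[ℝ] H)
    (hker : FiniteDimensional ℝ (LinearMap.ker (l : H' →ₗ[ℝ] H)))
    (hrange : IsClosed (LinearMap.range (l : H' →ₗ[ℝ] H) : Set H))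
    (c : H' → H) (hc_cont : Continuous c)
    (hc_cpt : ∀ s : Set H', IsBounded s → IsCompact (closure (c '' s)))
    (h : ℕ → H') (hb : IsBounded (Set.range h))
    (hconv : Tendsto (fun n => l (h n) + c (h n)) atTop (nhds 0)) :
    ∃ x : H', l x + c x = 0 ∧
      ∃ φ : ℕ → ℕ, StrictMono φ ∧ Tendsto (fun n => h (φ n)) atTop (nhds x) := by
  classical
  set K : Submodule ℝ H' := LinearMap.ker (l : H' →ₗ[ℝ] H) with hK
  haveI : CompleteSpace K := FiniteDimensional.complete ℝ K
  haveI : ProperSpace K := FiniteDimensional.proper ℝ K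
  -- orthogonal decomposition
  set P := K.orthogonalProjectionOnto with hP
  set k : ℕ → K := fun n => P (h n) with hk
  set m : ℕ → H' := fun n => h n - (k n : H') with hm
  have hmK : ∀ n, m n ∈ Kᗮ := fun n => K.sub_starProjection_mem_orthogonal (h n)
  -- the restricted map
  haveI : CompleteSpace (Kᗮ : Submodule ℝ H') := K.isClosed_orthogonal.completeSpace_coe
  haveI : CompleteSpace (LinearMap.range (l : H' →ₗ[ℝ] H) : Submodule ℝ H) := hrange.completeSpace_coe
  set f : (Kᗮ : Submodule ℝ H') →L[ℝ] (LinearMap.range (l : H' →ₗ[ℝ] H) : Submodule ℝ H) :=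
    ((l.comp Kᗮ.subtypeL).codRestrict (LinearMap.range (l : H' →ₗ[ℝ] H))
      (fun x => LinearMap.mem_range_self _ _)) with hf
  have hfval : ∀ x : Kᗮ, (f x : H) = l x := fun x => rfl
  have hinj : f.ker = ⊥ := by
    rw [LinearMap.ker_eq_bot']
    intro x hx
    have hx' : l x = 0 := by
      have := congrArg (Subtype.val) hx
      simpa [hfval] using this
    have hxK : (x : H') ∈ K := hx'
    have : (x : H') ∈ K ⊓ Kᗮ := ⟨hxK, x.2⟩
    rw [Submodule.inf_orthogonal_eq_bot] at this
    exact Subtype.ext (by simpa using this)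
  have hsurj : f.range = ⊤ := by
    rw [LinearMap.range_eq_top]
    rintro ⟨y, z, rfl⟩
    refine ⟨⟨z - P z, K.sub_starProjection_mem_orthogonal z⟩, ?_⟩
    ext
    have : l ((P z : H')) = 0 := (P z).2
    simp [hfval, map_sub, this]
  set e := ContinuousLinearEquiv.ofBijective f hinj hsurj with he
  -- extract subsequence where c (h ·) converges
  obtain ⟨y, -, φ₁, hφ₁, hy⟩ :=
    (hc_cpt _ hb).tendsto_subseq (x := fun n => c (h n))
      (fun n => subset_closure ⟨h n, Set.mem_range_self n, rfl⟩)
  -- extract subsequence where k converges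
  have hkb : IsBounded (Set.range fun n => k (φ₁ n)) := by
    obtain ⟨C, hC⟩ := hb.exists_norm_le
    apply (Metric.isBounded_iff_subset_closedBall 0).2
    refine ⟨C, ?_⟩
    rintro _ ⟨n, rfl⟩
    simp only [Metric.mem_closedBall, dist_zero_right]
    calc ‖k (φ₁ n)‖ ≤ ‖P‖ * ‖h (φ₁ n)‖ := P.le_opNorm _
      _ ≤ 1 * ‖h (φ₁ n)‖ :=
          mul_le_mul_of_nonneg_right (K.orthogonalProjectionOnto_norm_le) (norm_nonneg _)
      _ = ‖h (φ₁ n)‖ := one_mul _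
      _ ≤ C := hC _ (Set.mem_range_self _)
  obtain ⟨k₀, -, φ₂, hφ₂, hk₀⟩ :=
    tendsto_subseq_of_bounded hkb (x := fun n => k (φ₁ n)) (fun n => Set.mem_range_self n)
  set φ : ℕ → ℕ := φ₁ ∘ φ₂ with hφdef
  have hφ : StrictMono φ := hφ₁.comp hφ₂
  -- c (h (φ n)) → y along φ
  have hyφ : Tendsto (fun n => c (h (φ n))) atTop (nhds y) := hy.comp hφ₂.tendsto_atTop
  -- l (h (φ n)) → -y
  have hconvφ : Tendsto (fun n => l (h (φ n)) + c (h (φ n))) atTop (nhds 0) :=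
    hconv.comp hφ.tendsto_atTop
  have hlφ : Tendsto (fun n => l (h (φ n))) atTop (nhds (-y)) := by
    have := hconvφ.sub hyφ
    simpa using this
  -- l (m (φ n)) = l (h (φ n))
  have hlm : ∀ n, l (m n) = l (h n) := by
    intro n
    have : l ((k n : H')) = 0 := (k n).2
    simp [hm, map_sub, this]
  have hlmφ : Tendsto (fun n => l (m (φ n))) atTop (nhds (-y)) := by
    simpa only [hlm] using hlφ
  have hyR : -y ∈ LinearMap.range (l : H' →ₗ[ℝ] H) := by
    have : -y ∈ closure (LinearMap.range (l : H' →ₗ[ℝ] H) : Set H) :=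
      mem_closure_of_tendsto hlmφ (Eventually.of_forall fun n => LinearMap.mem_range_self _ _)
    rwa [hrange.closure_eq] at this
  -- convergence of m (φ n)
  set M : ℕ → (Kᗮ : Submodule ℝ H') := fun n => ⟨m (φ n), hmK (φ n)⟩ with hM
  have hfM : Tendsto (fun n => f (M n)) atTop (nhds ⟨-y, hyR⟩) := by
    rw [tendsto_subtype_rng]
    exact hlmφ
  have hMconv : Tendsto M atTop (nhds (e.symm ⟨-y, hyR⟩)) := by
    have h1 : Tendsto (fun n => e.symm (f (M n))) atTop (nhds (e.symm ⟨-y, hyR⟩)) :=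
      (e.symm.continuous.tendsto _).comp hfM
    have h2 : ∀ n, e.symm (f (M n)) = M n := fun n =>
      ContinuousLinearEquiv.ofBijective_symm_apply_apply f hinj hsurj (M n)
    simpa only [h2] using h1
  set m₀ : H' := ((e.symm ⟨-y, hyR⟩ : (Kᗮ : Submodule ℝ H')) : H') with hm₀
  have hmφ : Tendsto (fun n => m (φ n)) atTop (nhds m₀) :=
    (continuous_subtype_val.tendsto _).comp hMconv
  have hkφ : Tendsto (fun n => (k (φ n) : H')) atTop (nhds (k₀ : H')) :=
    (continuous_subtype_val.tendsto _).comp hk₀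
  set x : H' := (k₀ : H') + m₀ with hx
  have hhφ : Tendsto (fun n => h (φ n)) atTop (nhds x) := by
    have : ∀ n, h (φ n) = (k (φ n) : H') + m (φ n) := fun n => by
      simp [hm]
    simpa only [this] using hkφ.add hmφ
  refine ⟨x, ?_, φ, hφ, hhφ⟩
  have h1 : Tendsto (fun n => l (h (φ n)) + c (h (φ n))) atTop (nhds (l x + c x)) :=
    ((l.continuous.tendsto _).comp hhφ).add ((hc_cont.tendsto _).comp hhφ)
  exact tendsto_nhds_unique h1 hconvφ
end

section
/- Let δ > 0, let r and L be real numbers with r ≥ 1 and L ≥ 2r, and let λ be a real number with λ > δ. Then sinh(4rλ)/λ ≤ (e^{−2δ(L−2r)}/(1 − e^{−2δ})) · (e^{2λL} − e^{2λ(L−1)})/(2λ). -/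
/-- The key `sinh` inequality for neck stretching: for `δ > 0`, `r ≥ 1`, `L ≥ 2r` and
`λ > δ`, one has
`sinh(4rλ)/λ ≤ (e^{-2δ(L-2r)}/(1 - e^{-2δ})) · (e^{2λL} - e^{2λ(L-1)})/(2λ)`. -/
theorem stmt_7 (δ r L lam : ℝ) (hδ : 0 < δ) (hr : 1 ≤ r) (hL : 2 * r ≤ L)
    (hlam : δ < lam) :
    Real.sinh (4 * r * lam) / lam ≤
      (Real.exp (-2 * δ * (L - 2 * r)) / (1 - Real.exp (-2 * δ))) *
        ((Real.exp (2 * lam * L) - Real.exp (2 * lam * (L - 1))) / (2 * lam)) := by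
  have hl : 0 < lam := hδ.trans hlam
  have hEd : Real.exp (-2 * δ) < 1 := by
    have : (-2 : ℝ) * δ < 0 := by linarith
    simpa using Real.exp_lt_one_iff.2 this
  have hdpos : 0 < 1 - Real.exp (-2 * δ) := by linarith
  have hElam : Real.exp (-2 * lam) ≤ Real.exp (-2 * δ) := Real.exp_le_exp.2 (by linarith)
  have hmono : Real.exp (-2 * lam * (L - 2 * r)) ≤ Real.exp (-2 * δ * (L - 2 * r)) :=
    Real.exp_le_exp.2 (by nlinarith)
  have hBpos : 0 ≤ Real.exp (2 * lam * L) - Real.exp (2 * lam * (L - 1)) := by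
    have := Real.exp_le_exp.2 (show 2 * lam * (L - 1) ≤ 2 * lam * L by nlinarith)
    linarith
  have e1 : Real.exp (-2 * lam * (L - 2 * r)) * Real.exp (2 * lam * L)
      = Real.exp (4 * r * lam) := by
    rw [← Real.exp_add]; ring_nf
  have e2 : Real.exp (-2 * lam * (L - 2 * r)) * Real.exp (2 * lam * (L - 1))
      = Real.exp (4 * r * lam) * Real.exp (-2 * lam) := by
    rw [← Real.exp_add, ← Real.exp_add]; ring_nf
  have hsinh : Real.sinh (4 * r * lam)
      = (Real.exp (4 * r * lam) - Real.exp (-(4 * r * lam))) / 2 := Real.sinh_eq _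
  have main : Real.sinh (4 * r * lam) * (1 - Real.exp (-2 * δ)) * 2 ≤
      Real.exp (-2 * δ * (L - 2 * r)) *
        (Real.exp (2 * lam * L) - Real.exp (2 * lam * (L - 1))) := by
    nlinarith [mul_le_mul_of_nonneg_right hmono hBpos,
      mul_le_mul_of_nonneg_left hElam (Real.exp_pos (4 * r * lam)).le,
      mul_pos (Real.exp_pos (-(4 * r * lam))) hdpos,
      Real.exp_pos (4 * r * lam)]
  rw [div_mul_div_comm, div_le_div_iff₀ hl (by positivity)]
  nlinarith [mul_le_mul_of_nonneg_right main hl.le]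
end

section
/- Let δ > 0, let r and L be real numbers with r ≥ 1 and L ≥ 2r, let λ : ℕ → ℝ satisfy λₙ > δ for all n ≥ 1, and let a : ℕ → ℝ. Then Σ_{n≥1} (sinh(4rλₙ)/λₙ) · aₙ² ≤ (e^{−2δ(L−2r)}/(1 − e^{−2δ})) · Σ_{n≥1} ((e^{2λₙL} − e^{2λₙ(L−1)})/(2λₙ)) · aₙ², where both sums are taken in the extended nonnegative reals [0,∞]. -/
lemma key_sinh_collar (δ r L lm : ℝ) (hδ : 0 < δ) (hr : 1 ≤ r) (hL : 2 * r ≤ L)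
    (hlm : δ < lm) :
    Real.sinh (4 * r * lm) / lm ≤
      Real.exp (-2 * δ * (L - 2 * r)) / (1 - Real.exp (-2 * δ)) *
        ((Real.exp (2 * lm * L) - Real.exp (2 * lm * (L - 1))) / (2 * lm)) := by
  have hlmpos : 0 < lm := hδ.trans hlm
  have hBpos : 0 < 1 - Real.exp (-2 * δ) := by
    have : Real.exp (-2 * δ) < 1 := Real.exp_lt_one_iff.mpr (by nlinarith)
    linarith
  have hB' : 1 - Real.exp (-2 * δ) ≤ 1 - Real.exp (-2 * lm) := by
    have : Real.exp (-2 * lm) ≤ Real.exp (-2 * δ) := Real.exp_le_exp.mpr (by nlinarith)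
    linarith
  set A := Real.exp (-2 * δ * (L - 2 * r)) with hA
  set B := 1 - Real.exp (-2 * δ) with hBdef
  have hexp : Real.exp (4 * r * lm) ≤ A * Real.exp (2 * lm * L) := by
    rw [hA, ← Real.exp_add]
    exact Real.exp_le_exp.mpr (by nlinarith)
  have hD : Real.exp (2 * lm * (L - 1)) = Real.exp (2 * lm * L) * Real.exp (-2 * lm) := by
    rw [← Real.exp_add]; ring_nf
  have main : Real.sinh (4 * r * lm) ≤
      A / B * (Real.exp (2 * lm * L) - Real.exp (2 * lm * (L - 1))) / 2 := by
    rw [Real.sinh_eq, div_le_div_iff₀ (by norm_num) (by norm_num),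
      div_mul_eq_mul_div, div_mul_eq_mul_div, le_div_iff₀ hBpos]
    have h1 : 0 < Real.exp (-(4 * r * lm)) := Real.exp_pos _
    have h2 : 0 ≤ A * Real.exp (2 * lm * L) := by positivity
    rw [hD]
    nlinarith [mul_nonneg h2 (sub_nonneg.mpr hB'),
      mul_nonneg (sub_nonneg.mpr hexp) hBpos.le]
  calc Real.sinh (4 * r * lm) / lm
      ≤ (A / B * (Real.exp (2 * lm * L) - Real.exp (2 * lm * (L - 1))) / 2) / lm := by
        gcongr
    _ = A / B * ((Real.exp (2 * lm * L) - Real.exp (2 * lm * (L - 1))) / (2 * lm)) := by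
        rw [div_div, mul_div_assoc]

/-- Comparing the `sinh` sum on the middle band with the collar sum: for `δ > 0`,
`r ≥ 1`, `L ≥ 2r` and eigenvalues `λₙ > δ` (n ≥ 1),
`Σ_{n≥1} (sinh(4rλₙ)/λₙ)aₙ² ≤ (e^{-2δ(L-2r)}/(1-e^{-2δ})) Σ_{n≥1} ((e^{2λₙL}-e^{2λₙ(L-1)})/(2λₙ))aₙ²`
in the extended nonnegative reals. -/
theorem stmt_9 (δ r L : ℝ) (hδ : 0 < δ) (hr : 1 ≤ r) (hL : 2 * r ≤ L)
    (lam : ℕ → ℝ) (hlam : ∀ n : ℕ, 1 ≤ n → δ < lam n) (a : ℕ → ℝ) :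
    (∑' n : ℕ,
        ENNReal.ofReal (Real.sinh (4 * r * lam (n + 1)) / lam (n + 1) * a (n + 1) ^ 2)) ≤
      ENNReal.ofReal (Real.exp (-2 * δ * (L - 2 * r)) / (1 - Real.exp (-2 * δ))) *
        ∑' n : ℕ,
          ENNReal.ofReal
            ((Real.exp (2 * lam (n + 1) * L) - Real.exp (2 * lam (n + 1) * (L - 1))) /
                (2 * lam (n + 1)) * a (n + 1) ^ 2) := by
  have hBpos : 0 < 1 - Real.exp (-2 * δ) := by
    have : Real.exp (-2 * δ) < 1 := Real.exp_lt_one_iff.mpr (by nlinarith)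
    linarith
  have hC : 0 ≤ Real.exp (-2 * δ * (L - 2 * r)) / (1 - Real.exp (-2 * δ)) :=
    div_nonneg (Real.exp_pos _).le hBpos.le
  rw [← ENNReal.tsum_mul_left]
  refine ENNReal.tsum_le_tsum fun n => ?_
  rw [← ENNReal.ofReal_mul hC]
  refine ENNReal.ofReal_le_ofReal ?_
  have h := key_sinh_collar δ r L (lam (n + 1)) hδ hr hL (hlam (n + 1) (by omega))
  nlinarith [sq_nonneg (a (n + 1)), h]
end

section
/- Let λ : ℕ → ℝ and δ > 0 satisfy |λₙ| ≥ δ for all n ≥ 1, and suppose there exist constants C₃ > 0, α > 0 and N ∈ ℕ such that |λₙ| ≥ C₃·n^α for all n ≥ N. Then there exists a constant C ≥ 0 such that for every real r ≥ 1 and every sequence a : ℕ → ℝ, ( Σ_{n≥1} (λₙ² + 1) e^{r|λₙ|} |aₙ| )² ≤ C · Σ_{n≥1} (sinh(4r|λₙ|)/|λₙ|) · aₙ², where both sums are taken in the extended nonnegative reals [0,∞]. -/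
open MeasureTheory ENNReal in
lemma my_ennreal_cs (f g : ℕ → ℝ≥0∞) :
    (∑' n, f n * g n) ^ 2 ≤ (∑' n, f n ^ 2) * (∑' n, g n ^ 2) := by
  have h := ENNReal.lintegral_mul_le_Lp_mul_Lq (Measure.count (α := ℕ))
    ((Real.holderConjugate_iff (p := 2) (q := 2)).mpr ⟨one_lt_two, by norm_num⟩)
    (f := f) (g := g) (measurable_of_countable f).aemeasurable
    (measurable_of_countable g).aemeasurable
  simp only [lintegral_count, Pi.mul_apply] at h
  have h2 : ∀ x : ℝ≥0∞, x ^ (2:ℝ) = x ^ 2 := fun x => by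
    rw [← ENNReal.rpow_natCast x 2]; norm_num
  simp only [h2] at h
  calc (∑' n, f n * g n) ^ 2
      ≤ ((∑' n, f n ^ 2) ^ (1/(2:ℝ)) * (∑' n, g n ^ 2) ^ (1/(2:ℝ))) ^ 2 := by
        exact pow_le_pow_left' h 2
    _ = (∑' n, f n ^ 2) * (∑' n, g n ^ 2) := by
        rw [mul_pow, ← h2, ← h2, ← ENNReal.rpow_mul, ← ENNReal.rpow_mul]
        norm_num

lemma my_summable_exp_neg_rpow {c α : ℝ} (hc : 0 < c) (hα : 0 < α) :
    Summable (fun n : ℕ => Real.exp (-(c * ((n:ℝ) + 1) ^ α))) := by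
  obtain ⟨m, hm⟩ : ∃ m : ℕ, 2 ≤ α * m := by
    obtain ⟨m, hm⟩ := exists_nat_ge (2 / α)
    rw [div_le_iff₀ hα] at hm
    exact ⟨m, by linarith [mul_comm (m:ℝ) α]⟩
  have key : ∀ n : ℕ, Real.exp (-(c * ((n:ℝ) + 1) ^ α)) ≤
      (m.factorial / c ^ m) * (1 / ((n:ℝ) + 1) ^ 2) := by
    intro n
    set y : ℝ := (n : ℝ) + 1 with hy
    have hy1 : (1:ℝ) ≤ y := by have := Nat.cast_nonneg (α := ℝ) n; linarith
    have hy0 : (0:ℝ) < y := by linarith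
    have hyα : (0:ℝ) < y ^ α := Real.rpow_pos_of_pos hy0 α
    have h1 : (c * y ^ α) ^ m / m.factorial ≤ Real.exp (c * y ^ α) :=
      Real.pow_div_factorial_le_exp _ (by positivity) m
    rw [mul_pow] at h1
    have h2 : (y:ℝ) ^ (2:ℕ) ≤ (y ^ α) ^ m := by
      have he : ((y:ℝ) ^ α) ^ m = y ^ (α * m) := by
        rw [← Real.rpow_natCast (y ^ α) m, ← Real.rpow_mul hy0.le]
      rw [he, ← Real.rpow_natCast y 2]
      exact Real.rpow_le_rpow_of_exponent_le hy1 (by push_cast; linarith)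
    have hfac : (0:ℝ) < m.factorial := by positivity
    have h3 : c ^ m * y ^ 2 / m.factorial ≤ Real.exp (c * y ^ α) := by
      refine le_trans ?_ h1
      gcongr
    rw [Real.exp_neg]
    have hpos : (0:ℝ) < c ^ m * y ^ 2 / m.factorial := by positivity
    have h4 := inv_anti₀ hpos h3
    refine h4.trans_eq ?_
    field_simp
  refine Summable.of_nonneg_of_le (fun n => (Real.exp_pos _).le) key ?_
  apply Summable.mul_left
  have h0 : Summable (fun n : ℕ => 1 / ((n:ℝ)) ^ 2) :=
    Real.summable_one_div_nat_pow.mpr one_lt_two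
  have h := (summable_nat_add_iff 1).mpr h0
  simpa using h

lemma my_poly_exp_bound {t : ℝ} (ht : 0 ≤ t) :
    (t^2+1)^2 * t * Real.exp (-(2*t)) ≤ 720 * Real.exp 1 * Real.exp (-t) := by
  have h1 : (t^2+1)^2 * t ≤ (t+1)^5 := by
    nlinarith [sq_nonneg t, sq_nonneg (t-1), sq_nonneg (t*(t-1))]
  have h2 : (t+1)^6 / 720 ≤ Real.exp (t+1) := by
    have h := Real.pow_div_factorial_le_exp (t+1) (by linarith) 6
    norm_num [Nat.factorial] at h
    exact h
  have h3 : (t+1)^5 ≤ (t+1)^6 := pow_le_pow_right₀ (by linarith) (by norm_num)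
  have h5 : (t^2+1)^2 * t ≤ 720 * Real.exp 1 * Real.exp t := by
    have h6 : (t+1)^6 ≤ 720 * Real.exp (t+1) := by linarith
    rw [Real.exp_add] at h6
    nlinarith [Real.exp_pos t, Real.exp_pos 1]
  calc (t^2+1)^2 * t * Real.exp (-(2*t))
      ≤ (720 * Real.exp 1 * Real.exp t) * Real.exp (-(2*t)) :=
        mul_le_mul_of_nonneg_right h5 (Real.exp_pos _).le
    _ = 720 * Real.exp 1 * Real.exp (-t) := by
        rw [mul_assoc, ← Real.exp_add]; ring_nf

noncomputable def myM (lam : ℕ → ℝ) (δ : ℝ) (n : ℕ) : ℝ :=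
  2 / (1 - Real.exp (-(8*δ))) * (|lam (n+1)|^2 + 1)^2 * |lam (n+1)| *
    Real.exp (-(2 * |lam (n+1)|))

lemma myM_nonneg (lam : ℕ → ℝ) {δ : ℝ} (hδ : 0 < δ) (n : ℕ) : 0 ≤ myM lam δ n := by
  have hq1 : Real.exp (-(8*δ)) < 1 := Real.exp_lt_one_iff.mpr (by linarith)
  unfold myM
  have hK : (0:ℝ) ≤ 2 / (1 - Real.exp (-(8*δ))) := le_of_lt (div_pos two_pos (by linarith))
  exact mul_nonneg (mul_nonneg (mul_nonneg hK (by positivity)) (abs_nonneg _))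
    (Real.exp_pos _).le

set_option maxHeartbeats 2000000 in
lemma myM_summable (lam : ℕ → ℝ) {δ C₃ α : ℝ} (hδ : 0 < δ) (hC₃ : 0 < C₃) (hα : 0 < α)
    (N : ℕ) (hN : ∀ n : ℕ, N ≤ n → C₃ * (n : ℝ) ^ α ≤ |lam n|) :
    Summable (myM lam δ) := by
  have hq1 : Real.exp (-(8*δ)) < 1 := Real.exp_lt_one_iff.mpr (by linarith)
  set K : ℝ := 2 / (1 - Real.exp (-(8*δ))) with hK
  have hK0 : 0 < K := div_pos two_pos (by linarith)
  rw [← summable_nat_add_iff N]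
  refine Summable.of_nonneg_of_le (fun n => myM_nonneg lam hδ _)
    (f := fun n : ℕ => (K * (720 * Real.exp 1)) *
      Real.exp (-(C₃ * (((n + N : ℕ) : ℝ) + 1) ^ α))) (fun n => ?_) ?_
  · have hb := my_poly_exp_bound (abs_nonneg (lam (n + N + 1)))
    have hgrow : C₃ * (((n + N : ℕ) : ℝ) + 1) ^ α ≤ |lam (n + N + 1)| := by
      have h := hN (n + N + 1) (by omega)
      have hc : ((n + N + 1 : ℕ) : ℝ) = ((n + N : ℕ) : ℝ) + 1 := by push_cast; ring
      rwa [hc] at h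
    have hexp : Real.exp (-|lam (n + N + 1)|) ≤
        Real.exp (-(C₃ * (((n + N : ℕ) : ℝ) + 1) ^ α)) :=
      Real.exp_le_exp.mpr (by linarith)
    calc myM lam δ (n + N)
        = K * ((|lam (n + N + 1)|^2 + 1)^2 * |lam (n + N + 1)| *
            Real.exp (-(2 * |lam (n + N + 1)|))) := by
          unfold myM; rw [← hK]; ring
      _ ≤ K * (720 * Real.exp 1 * Real.exp (-|lam (n + N + 1)|)) :=
          mul_le_mul_of_nonneg_left hb hK0.le
      _ ≤ K * (720 * Real.exp 1 * Real.exp (-(C₃ * (((n + N : ℕ) : ℝ) + 1) ^ α))) := by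
          have : (0:ℝ) ≤ K * (720 * Real.exp 1) := by positivity
          nlinarith [Real.exp_pos 1]
      _ = (K * (720 * Real.exp 1)) * Real.exp (-(C₃ * (((n + N : ℕ) : ℝ) + 1) ^ α)) := by
          ring
  · exact Summable.mul_left _
      ((summable_nat_add_iff N).mpr (my_summable_exp_neg_rpow hC₃ hα))

lemma my_pointwise {δ r T : ℝ} (hδ : 0 < δ) (hr : 1 ≤ r) (hT : δ ≤ T) :
    ((T^2+1) * Real.exp (r*T))^2 / (Real.sinh (4*r*T)/T)
      ≤ 2 / (1 - Real.exp (-(8*δ))) * (T^2+1)^2 * T * Real.exp (-(2*T)) := by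
  set q : ℝ := Real.exp (-(8*δ)) with hq
  have hq1 : q < 1 := Real.exp_lt_one_iff.mpr (by linarith)
  have hq0 : 0 < q := Real.exp_pos _
  set K : ℝ := 2 / (1 - q) with hK
  have hK0 : 0 < K := div_pos two_pos (by linarith)
  have hT0 : 0 < T := lt_of_lt_of_le hδ hT
  have hr0 : 0 < r := lt_of_lt_of_le one_pos hr
  have hs0 : 0 < Real.sinh (4*r*T) :=
    Real.sinh_pos_iff.mpr (by nlinarith)
  have hw0 : 0 < Real.sinh (4*r*T)/T := div_pos hs0 hT0
  have hcore : Real.exp (r*T)^2 ≤ K * Real.exp (-(2*T)) * Real.sinh (4*r*T) := by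
    have hsinh : (1 - q)/2 * Real.exp (4*r*T) ≤ Real.sinh (4*r*T) := by
      rw [Real.sinh_eq]
      have hqq : Real.exp (-(4*r*T)) ≤ q * Real.exp (4*r*T) := by
        rw [hq, ← Real.exp_add]
        refine Real.exp_le_exp.mpr ?_
        have h1 : δ ≤ r * T := le_trans hT (le_mul_of_one_le_left hT0.le hr)
        linarith
      have := Real.exp_pos (4*r*T)
      linarith
    have hKs : Real.exp (4*r*T) ≤ K * Real.sinh (4*r*T) := by
      have h1 : K * ((1 - q)/2 * Real.exp (4*r*T)) ≤ K * Real.sinh (4*r*T) :=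
        mul_le_mul_of_nonneg_left hsinh hK0.le
      have h2 : K * ((1 - q)/2 * Real.exp (4*r*T)) = Real.exp (4*r*T) := by
        have hne : (1 - q) ≠ 0 := ne_of_gt (by linarith)
        rw [hK]; field_simp
      linarith
    have hexp2 : Real.exp (r*T)^2 = Real.exp (2*(r*T)) := by
      rw [sq, ← Real.exp_add]; ring_nf
    have hmono : Real.exp (2*(r*T)) ≤ Real.exp (-(2*T)) * Real.exp (4*r*T) := by
      rw [← Real.exp_add]
      refine Real.exp_le_exp.mpr ?_
      nlinarith
    calc Real.exp (r*T)^2 ≤ Real.exp (-(2*T)) * Real.exp (4*r*T) := by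
          rw [hexp2]; exact hmono
      _ ≤ Real.exp (-(2*T)) * (K * Real.sinh (4*r*T)) :=
          mul_le_mul_of_nonneg_left hKs (Real.exp_pos _).le
      _ = K * Real.exp (-(2*T)) * Real.sinh (4*r*T) := by ring
  rw [div_le_iff₀ hw0]
  have expand : K * (T^2+1)^2 * T * Real.exp (-(2*T)) * (Real.sinh (4*r*T)/T)
      = (T^2+1)^2 * (K * Real.exp (-(2*T)) * Real.sinh (4*r*T)) := by
    field_simp
  rw [expand]
  calc ((T^2+1) * Real.exp (r*T))^2 = (T^2+1)^2 * Real.exp (r*T)^2 := by ring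
    _ ≤ (T^2+1)^2 * (K * Real.exp (-(2*T)) * Real.sinh (4*r*T)) :=
        mul_le_mul_of_nonneg_left hcore (by positivity)


/-- Weyl-law Cauchy–Schwarz bound: if `|λₙ| ≥ δ > 0` for `n ≥ 1` and the eigenvalues
grow like `|λₙ| ≥ C₃ n^α` eventually, then there is a constant `C ≥ 0` such that for
all `r ≥ 1` and all sequences `a`,
`(Σ_{n≥1} (λₙ²+1)e^{r|λₙ|}|aₙ|)² ≤ C Σ_{n≥1} (sinh(4r|λₙ|)/|λₙ|)aₙ²`
in the extended nonnegative reals. -/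
theorem stmt_10 (lam : ℕ → ℝ) (δ : ℝ) (hδ : 0 < δ)
    (hlam : ∀ n : ℕ, 1 ≤ n → δ ≤ |lam n|)
    (hgrowth : ∃ C₃ : ℝ, 0 < C₃ ∧ ∃ α : ℝ, 0 < α ∧ ∃ N : ℕ,
      ∀ n : ℕ, N ≤ n → C₃ * (n : ℝ) ^ α ≤ |lam n|) :
    ∃ C : ℝ, 0 ≤ C ∧ ∀ r : ℝ, 1 ≤ r → ∀ a : ℕ → ℝ,
      (∑' n : ℕ,
          ENNReal.ofReal ((lam (n + 1) ^ 2 + 1) * Real.exp (r * |lam (n + 1)|) *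
            |a (n + 1)|)) ^ 2 ≤
        ENNReal.ofReal C *
          ∑' n : ℕ,
            ENNReal.ofReal
              (Real.sinh (4 * r * |lam (n + 1)|) / |lam (n + 1)| * a (n + 1) ^ 2) := by
  obtain ⟨C₃, hC₃, α, hα, N, hN⟩ := hgrowth
  have hsum : Summable (myM lam δ) := myM_summable lam hδ hC₃ hα N hN
  refine ⟨∑' n, myM lam δ n, tsum_nonneg (myM_nonneg lam hδ), ?_⟩
  intro r hr a
  have hr0 : (0:ℝ) < r := lt_of_lt_of_le one_pos hr
  have hLδ : ∀ n : ℕ, δ ≤ |lam (n+1)| := fun n => hlam (n+1) (Nat.le_add_left 1 n)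
  have hL0 : ∀ n : ℕ, (0:ℝ) < |lam (n+1)| := fun n => lt_of_lt_of_le hδ (hLδ n)
  have hw0 : ∀ n : ℕ, 0 < Real.sinh (4 * r * |lam (n+1)|) / |lam (n+1)| := fun n =>
    div_pos (Real.sinh_pos_iff.mpr (by have := hL0 n; nlinarith)) (hL0 n)
  set w : ℕ → ℝ := fun n => Real.sinh (4 * r * |lam (n+1)|) / |lam (n+1)| with hwdef
  set s : ℕ → ℝ := fun n => (lam (n+1)^2 + 1) * Real.exp (r * |lam (n+1)|) / Real.sqrt (w n)
    with hsdef
  set t : ℕ → ℝ := fun n => Real.sqrt (w n) * |a (n+1)| with htdef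
  have hs0 : ∀ n, 0 ≤ s n := fun n =>
    div_nonneg (mul_nonneg (by positivity) (Real.exp_pos _).le) (Real.sqrt_nonneg _)
  have ht0 : ∀ n, 0 ≤ t n := fun n => mul_nonneg (Real.sqrt_nonneg _) (abs_nonneg _)
  have hst : ∀ n, s n * t n =
      (lam (n+1)^2 + 1) * Real.exp (r * |lam (n+1)|) * |a (n+1)| := by
    intro n
    have hsq : Real.sqrt (w n) ≠ 0 := ne_of_gt (Real.sqrt_pos.mpr (hw0 n))
    simp only [hsdef, htdef]
    field_simp
  have ht2 : ∀ n, (ENNReal.ofReal (t n))^2 =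
      ENNReal.ofReal (Real.sinh (4 * r * |lam (n+1)|) / |lam (n+1)| * a (n+1)^2) := by
    intro n
    rw [← ENNReal.ofReal_pow (ht0 n)]
    congr 1
    simp only [htdef]
    rw [mul_pow, Real.sq_sqrt (hw0 n).le, sq_abs]
  have hs2 : ∀ n, (ENNReal.ofReal (s n))^2 ≤ ENNReal.ofReal (myM lam δ n) := by
    intro n
    rw [← ENNReal.ofReal_pow (hs0 n)]
    refine ENNReal.ofReal_le_ofReal ?_
    have hsq : s n ^ 2 =
        ((lam (n+1)^2 + 1) * Real.exp (r * |lam (n+1)|))^2 / w n := by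
      simp only [hsdef]
      rw [div_pow, Real.sq_sqrt (hw0 n).le]
    rw [hsq]
    have h := my_pointwise (T := |lam (n+1)|) hδ hr (hLδ n)
    rw [sq_abs] at h
    simp only [hwdef]
    unfold myM
    rw [sq_abs]
    exact h
  calc (∑' n : ℕ, ENNReal.ofReal ((lam (n + 1) ^ 2 + 1) * Real.exp (r * |lam (n + 1)|) *
        |a (n + 1)|)) ^ 2
      = (∑' n : ℕ, ENNReal.ofReal (s n) * ENNReal.ofReal (t n)) ^ 2 := by
        congr 1
        refine tsum_congr fun n => ?_
        rw [← ENNReal.ofReal_mul (hs0 n), hst n]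
    _ ≤ (∑' n : ℕ, ENNReal.ofReal (s n) ^ 2) * (∑' n : ℕ, ENNReal.ofReal (t n) ^ 2) :=
        my_ennreal_cs _ _
    _ ≤ ENNReal.ofReal (∑' n, myM lam δ n) * ∑' n : ℕ,
          ENNReal.ofReal (Real.sinh (4 * r * |lam (n + 1)|) / |lam (n + 1)| * a (n + 1) ^ 2) := by
        refine mul_le_mul' ?_ ?_
        · rw [ENNReal.ofReal_tsum_of_nonneg (myM_nonneg lam hδ) hsum]
          exact ENNReal.tsum_le_tsum hs2
        · exact le_of_eq (tsum_congr ht2)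
end
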